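/- Axiom Conf2 is strongly valid in all HMS structures satisfying confinedness: for every formula φ, the formula ¬K_i(φ = 1/2) ↪ K_i((φ ∨ ¬φ) = 1) is true at every state. -/

import Mathlib

inductive Form (α : Type) (n : ℕ) : Type
  | top : Form α n
  | prim (p : α) : Form α n
  | neg (φ : Form α n) : Form α n
  | and (φ ψ : Form α n) : Form α n
  | imp (φ ψ : Form α n) : Form α n
  | know (i : Fin n) (φ : Form α n) : Form α n

namespace Form

/-- The set of primitive propositions occurring in a formula. -/
def prims {α : Type} {n : ℕ} : Form α n → Set α
  | top => ∅
  | prim p => {p}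
  | neg φ => prims φ
  | and φ ψ => prims φ ∪ prims ψ
  | imp φ ψ => prims φ ∪ prims ψ
  | know _ φ => prims φ

/-- Formulas of `L^K_n` : no occurrence of the nonstandard implication `↪`. -/
def ImpFree {α : Type} {n : ℕ} : Form α n → Prop
  | top => True
  | prim _ => True
  | neg φ => ImpFree φ
  | and φ ψ => ImpFree φ ∧ ImpFree ψ
  | imp _ _ => False
  | know _ φ => ImpFree φ

end Form

/-- `φ = 1` abbreviates `¬(φ ↪ ¬⊤)`. -/
def eqOne {α : Type} {n : ℕ} (φ : Form α n) : Form α n := .neg (.imp φ (.neg .top))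
/-- `φ = 0` abbreviates `¬(¬φ ↪ ¬⊤)`. -/
def eqZero {α : Type} {n : ℕ} (φ : Form α n) : Form α n := .neg (.imp (.neg φ) (.neg .top))
/-- `φ = 1/2` abbreviates `(φ ↪ ¬⊤) ∧ (¬φ ↪ ¬⊤)`. -/
def eqHalf {α : Type} {n : ℕ} (φ : Form α n) : Form α n :=
  .and (.imp φ (.neg .top)) (.imp (.neg φ) (.neg .top))
/-- `φ ⇌ ψ` abbreviates `(φ ↪ ψ) ∧ (ψ ↪ φ)`. -/
def biimp {α : Type} {n : ℕ} (a b : Form α n) : Form α n := .and (.imp a b) (.imp b a)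
/-- `φ ∨ ψ` abbreviates `¬(¬φ ∧ ¬ψ)`. -/
def orF {α : Type} {n : ℕ} (a b : Form α n) : Form α n := .neg (.and (.neg a) (.neg b))

/-- An HMS structure for `n` agents over the set `α` of primitive propositions.
States are partitioned into spaces `S_Ψ` (recorded by `space`); `pi s p = none`
means `p` is undefined (value 1/2) at `s`; `proj s Ψ` is the projection
`ρ_{space s, Ψ} s`, meaningful when `Ψ ⊆ space s`. -/
structure HMS (α : Type) (n : ℕ) where
  State : Type
  space : State → Set α
  pi : State → α → Option Bool
  pi_def : ∀ s p, (pi s p).isSome ↔ p ∈ space s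
  k : Fin n → State → Set State
  proj : State → Set α → State
  proj_space : ∀ s Ψ, Ψ ⊆ space s → space (proj s Ψ) = Ψ
  proj_pi : ∀ s Ψ p, Ψ ⊆ space s → p ∈ Ψ → pi (proj s Ψ) p = pi s p
  proj_comp : ∀ s Ψ Ψ', Ψ ⊆ Ψ' → Ψ' ⊆ space s → proj (proj s Ψ') Ψ = proj s Ψ
  proj_surj : ∀ (t : State) (Ψ' : Set α), space t ⊆ Ψ' →
    ∃ s, space s = Ψ' ∧ proj s (space t) = t

namespace HMS

/-- 3-valued satisfaction: `(satp M φ s).1` is "φ is true at s",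
`(satp M φ s).2` is "¬φ is true at s" (i.e. φ is false at s). -/
def satp {α : Type} {n : ℕ} (M : HMS α n) : Form α n → M.State → Prop × Prop
  | .top => fun _ => (True, False)
  | .prim p => fun s => (M.pi s p = some true, M.pi s p = some false)
  | .neg φ => fun s => ((satp M φ s).2, (satp M φ s).1)
  | .and φ ψ => fun s =>
      ((satp M φ s).1 ∧ (satp M ψ s).1,
       ((satp M φ s).2 ∧ (satp M ψ s).1) ∨ ((satp M φ s).1 ∧ (satp M ψ s).2) ∨
         ((satp M φ s).2 ∧ (satp M ψ s).2))
  | .imp φ ψ => fun s =>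
      (((satp M φ s).1 ∧ (satp M ψ s).1) ∨ (¬ (satp M φ s).1 ∧ ¬ (satp M φ s).2) ∨
         ((satp M φ s).2 ∧ ((satp M ψ s).1 ∨ (satp M ψ s).2)),
       (satp M φ s).1 ∧ (satp M ψ s).2)
  | .know i φ => fun s =>
      (((satp M φ s).1 ∨ (satp M φ s).2) ∧ ∀ t ∈ M.k i s, (satp M φ t).1,
       ((satp M φ s).1 ∨ (satp M φ s).2) ∧
         ¬ (((satp M φ s).1 ∨ (satp M φ s).2) ∧ ∀ t ∈ M.k i s, (satp M φ t).1))

/-- `(M,s) ⊨ φ`. -/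
def Sat {α : Type} {n : ℕ} (M : HMS α n) (s : M.State) (φ : Form α n) : Prop :=
  (satp M φ s).1
/-- `(M,s) ⊨ ¬φ`. -/
def SatN {α : Type} {n : ℕ} (M : HMS α n) (s : M.State) (φ : Form α n) : Prop :=
  (satp M φ s).2
/-- `φ` is defined (true or false) at `s`. -/
def Defined {α : Type} {n : ℕ} (M : HMS α n) (s : M.State) (φ : Form α n) : Prop :=
  M.Sat s φ ∨ M.SatN s φ

/-- `⟦φ⟧_M`, the set of states where `φ` is true. -/
def truthSet {α : Type} {n : ℕ} (M : HMS α n) (φ : Form α n) : Set M.State :=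
  {s | M.Sat s φ}

/-- Confinedness: if `s ∈ S_Ψ` then `K_i(s) ⊆ S_{Ψ'}` for some `Ψ' ⊆ Ψ`. -/
def Confined {α : Type} {n : ℕ} (M : HMS α n) : Prop :=
  ∀ (i : Fin n) (s : M.State), ∃ Ψ', Ψ' ⊆ M.space s ∧ ∀ t ∈ M.k i s, M.space t = Ψ'

/-- `(K_i(s))^↑`, the states in which (some member of) `K_i(s)` is expressible:
`x ∈ (K_i(s))^↑` iff some `t ∈ K_i(s)` lies in a space `⊆ space x` and `x` projects to `t`. -/
def kUp {α : Type} {n : ℕ} (M : HMS α n) (i : Fin n) (s : M.State) : Set M.State :=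
  {x | ∃ t ∈ M.k i s, M.space t ⊆ M.space x ∧ M.proj x (M.space t) = t}

/-- Generalized reflexivity (`r`): `s ∈ (K_i(s))^↑`. -/
def GenRefl {α : Type} {n : ℕ} (M : HMS α n) : Prop :=
  ∀ (i : Fin n) (s : M.State), s ∈ M.kUp i s
/-- Stationarity, part (a) (`t`): `s' ∈ K_i(s)` implies `K_i(s') ⊆ K_i(s)`. -/
def StatA {α : Type} {n : ℕ} (M : HMS α n) : Prop :=
  ∀ (i : Fin n) (s s' : M.State), s' ∈ M.k i s → M.k i s' ⊆ M.k i s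
/-- Stationarity, part (b) (`e`): `s' ∈ K_i(s)` implies `K_i(s') ⊇ K_i(s)`. -/
def StatB {α : Type} {n : ℕ} (M : HMS α n) : Prop :=
  ∀ (i : Fin n) (s s' : M.State), s' ∈ M.k i s → M.k i s ⊆ M.k i s'
/-- Projections preserve knowledge. -/
def ProjKnow {α : Type} {n : ℕ} (M : HMS α n) : Prop :=
  ∀ (i : Fin n) (s : M.State) (Ψ1 Ψ2 : Set α), Ψ1 ⊆ Ψ2 → Ψ2 ⊆ M.space s →
    (∀ t ∈ M.k i s, M.space t = Ψ2) →
    (fun t => M.proj t Ψ1) '' M.k i s = M.k i (M.proj s Ψ1)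
/-- Projections preserve ignorance. -/
def ProjIgn {α : Type} {n : ℕ} (M : HMS α n) : Prop :=
  ∀ (i : Fin n) (s : M.State) (Ψ : Set α), Ψ ⊆ M.space s →
    M.kUp i s ⊆ M.kUp i (M.proj s Ψ)

end HMS

/-!
Both `K_i(φ = 1/2)` and `K_i((φ ∨ ¬φ) = 1)` are two-valued, so `Conf2` at `s` amounts to the
classical disjunction of the two. Whether a formula is defined at a state depends only on the
space of the state, and by confinedness all of `K_i(s)` lies in one space; so `φ` is undefined
throughout `K_i(s)` (the first disjunct) or defined throughout it (the second).
-/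

namespace Form

variable {α : Type} {n : ℕ}

/-- Definedness of a formula at the states of the space `S_Ψ`, computed syntactically. -/
def DefinedOver (Ψ : Set α) : Form α n → Prop
  | top => True
  | prim p => p ∈ Ψ
  | neg φ => DefinedOver Ψ φ
  | and φ ψ => DefinedOver Ψ φ ∧ DefinedOver Ψ ψ
  | imp φ ψ => ¬ DefinedOver Ψ φ ∨ DefinedOver Ψ ψ
  | know _ φ => DefinedOver Ψ φ

end Form

namespace HMS

variable {α : Type} {n : ℕ} (M : HMS α n)

theorem not_sat_and_satN (φ : Form α n) (t : M.State) : ¬ (M.Sat t φ ∧ M.SatN t φ) := by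
  induction φ with
  | top => simp [Sat, SatN, satp]
  | prim p =>
    rintro ⟨htrue, hfalse⟩
    simp only [Sat, SatN, satp] at htrue hfalse
    simp [htrue] at hfalse
  | neg φ ih => simp only [Sat, SatN, satp] at *; tauto
  | and φ ψ ihφ ihψ => simp only [Sat, SatN, satp] at *; tauto
  | imp φ ψ ihφ ihψ => simp only [Sat, SatN, satp] at *; tauto
  | know i φ _ => simp only [Sat, SatN, satp]; tauto

theorem defined_iff_definedOver (φ : Form α n) (t : M.State) :
    M.Defined t φ ↔ φ.DefinedOver (M.space t) := by
  induction φ with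
  | top => simp [Defined, Sat, SatN, satp, Form.DefinedOver]
  | prim p =>
    simp only [Defined, Sat, SatN, satp, Form.DefinedOver, ← M.pi_def]
    cases M.pi t p with
    | none => simp
    | some b => cases b <;> simp
  | neg φ ih => simp only [Defined, Sat, SatN, satp, Form.DefinedOver] at *; rw [← ih]; tauto
  | and φ ψ ihφ ihψ =>
    simp only [Defined, Sat, SatN, satp, Form.DefinedOver] at *; rw [← ihφ, ← ihψ]; tauto
  | imp φ ψ ihφ ihψ =>
    simp only [Defined, Sat, SatN, satp, Form.DefinedOver] at *; rw [← ihφ, ← ihψ]; tauto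
  | know i φ ih => simp only [Defined, Sat, SatN, satp, Form.DefinedOver] at *; rw [← ih]; tauto

theorem defined_congr_of_space_eq {t t' : M.State} (h : M.space t = M.space t')
    (φ : Form α n) : M.Defined t φ ↔ M.Defined t' φ := by
  rw [defined_iff_definedOver, defined_iff_definedOver, h]

theorem Confined.forall_not_defined_or_forall_defined (hconf : M.Confined) (i : Fin n)
    (s : M.State) (φ : Form α n) :
    (∀ t ∈ M.k i s, ¬ M.Defined t φ) ∨ ∀ t ∈ M.k i s, M.Defined t φ := by
  obtain ⟨Ψ', -, hspace⟩ := hconf i s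
  by_contra! ⟨⟨t₀, ht₀, hdef₀⟩, ⟨t₁, ht₁, hundef₁⟩⟩
  rw [M.defined_congr_of_space_eq ((hspace t₀ ht₀).trans (hspace t₁ ht₁).symm)] at hdef₀
  exact hundef₁ hdef₀

theorem sat_know_iff (i : Fin n) (φ : Form α n) (s : M.State) :
    M.Sat s (.know i φ) ↔ M.Defined s φ ∧ ∀ t ∈ M.k i s, M.Sat t φ :=
  Iff.rfl

theorem defined_know_iff (i : Fin n) (φ : Form α n) (s : M.State) :
    M.Defined s (.know i φ) ↔ M.Defined s φ := by
  simp only [Defined, Sat, SatN, satp]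
  tauto

theorem defined_eqHalf (φ : Form α n) (s : M.State) : M.Defined s (eqHalf φ) := by
  simp only [Defined, Sat, SatN, eqHalf, satp]
  tauto

theorem defined_eqOne (φ : Form α n) (s : M.State) : M.Defined s (eqOne φ) := by
  simp only [Defined, Sat, SatN, eqOne, satp]
  tauto

theorem sat_eqHalf_iff (φ : Form α n) (s : M.State) :
    M.Sat s (eqHalf φ) ↔ ¬ M.Defined s φ := by
  have := M.not_sat_and_satN φ s
  simp only [Defined, Sat, SatN, eqHalf, satp] at *
  tauto

theorem sat_eqOne_or_neg_iff (φ : Form α n) (s : M.State) :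
    M.Sat s (eqOne (orF φ (.neg φ))) ↔ M.Defined s φ := by
  simp only [Defined, Sat, SatN, eqOne, orF, satp]
  tauto

theorem sat_know_eqHalf_iff (i : Fin n) (φ : Form α n) (s : M.State) :
    M.Sat s (.know i (eqHalf φ)) ↔ ∀ t ∈ M.k i s, ¬ M.Defined t φ := by
  simp only [sat_know_iff, sat_eqHalf_iff, M.defined_eqHalf, true_and]

theorem sat_know_eqOne_or_neg_iff (i : Fin n) (φ : Form α n) (s : M.State) :
    M.Sat s (.know i (eqOne (orF φ (.neg φ)))) ↔ ∀ t ∈ M.k i s, M.Defined t φ := by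
  simp only [sat_know_iff, sat_eqOne_or_neg_iff, M.defined_eqOne, true_and]

theorem sat_imp_neg_iff_of_defined {φ ψ : Form α n} {s : M.State} (hφ : M.Defined s φ)
    (hψ : M.Defined s ψ) : M.Sat s (.imp (.neg φ) ψ) ↔ M.Sat s φ ∨ M.Sat s ψ := by
  have := M.not_sat_and_satN φ s
  simp only [Defined, Sat, SatN, satp] at *
  tauto

end HMS

/-- Axiom Conf2, `¬K_i(φ = 1/2) ↪ K_i((φ ∨ ¬φ) = 1)`, is strongly valid in all HMS
structures satisfying confinedness. -/
theorem Conf2_strongly_valid {α : Type} {n : ℕ} (M : HMS α n) (hconf : M.Confined)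
    (i : Fin n) (φ : Form α n) (s : M.State) :
    M.Sat s (.imp (.neg (.know i (eqHalf φ))) (.know i (eqOne (orF φ (.neg φ))))) := by
  rw [M.sat_imp_neg_iff_of_defined ((M.defined_know_iff ..).2 (M.defined_eqHalf ..))
    ((M.defined_know_iff ..).2 (M.defined_eqOne ..)), M.sat_know_eqHalf_iff,
    M.sat_know_eqOne_or_neg_iff]
  exact hconf.forall_not_defined_or_forall_defined M i s φ
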